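/- arXiv:2107.03840 — 3 statements merged into one kernel-verified Lean document; each statement's English description precedes it below -/
import Mathlib

section
/- Fix p ∈ (0,1) and an integer γ ≥ 1, and for N ≥ γ let P_b(N) = (1/2) ∑_{k=0}^{γ−1} C(N,k) p^k (1−p)^{N−k} be the SBIT bit error rate. Then the transmit diversity gain ξ = lim_{N→∞} (−log P_b(N))/N exists and equals log(1/(1−p)); in particular the limit does not depend on the decision threshold γ. (Remark 3 of the paper, Transmit Diversity Gain.) -/
open Filter Real Finset

/-- Remark 3 (Transmit Diversity Gain): for fixed `p ∈ (0,1)` and threshold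
`γ ≥ 1`, the SBIT bit error rate `P_b(N) = (1/2) ∑_{k<γ} C(N,k) p^k (1-p)^{N-k}`
satisfies `(-log P_b(N)) / N → log (1/(1-p))` as `N → ∞`. -/
theorem stmt_6 (p : ℝ) (hp0 : 0 < p) (hp1 : p < 1) (γ : ℕ) (hγ : 1 ≤ γ) :
    Filter.Tendsto
      (fun N : ℕ =>
        (-Real.log ((1 / 2 : ℝ) *
          ∑ k ∈ Finset.range γ, (N.choose k : ℝ) * p ^ k * (1 - p) ^ (N - k))) / (N : ℝ))
      Filter.atTop (nhds (Real.log (1 / (1 - p)))) := by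
  have hq0 : (0:ℝ) < 1 - p := by linarith
  set S : ℕ → ℝ := fun N => ∑ k ∈ Finset.range γ, (N.choose k : ℝ) * p ^ k * (1 - p) ^ (N - k)
    with hSdef
  have hterm : ∀ N k : ℕ, 0 ≤ (N.choose k : ℝ) * p ^ k * (1 - p) ^ (N - k) := fun N k => by
    positivity
  have hlow : ∀ N, (1 - p) ^ N ≤ S N := by
    intro N
    have := Finset.single_le_sum (f := fun k => (N.choose k : ℝ) * p ^ k * (1 - p) ^ (N - k))
      (fun k _ => hterm N k) (Finset.mem_range.2 hγ)
    simpa using this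
  have hS_pos : ∀ N, 0 < S N := fun N => lt_of_lt_of_le (by positivity) (hlow N)
  have hup : ∀ N, 1 ≤ N → S N ≤ (γ : ℝ) * (N : ℝ) ^ γ * (1 - p) ^ (N - γ) := by
    intro N hN
    have h1 : S N ≤ ∑ _k ∈ Finset.range γ, (N : ℝ) ^ γ * (1 - p) ^ (N - γ) := by
      refine Finset.sum_le_sum fun k hk => ?_
      have hkγ : k ≤ γ := (Finset.mem_range.1 hk).le
      have hc : (N.choose k : ℝ) ≤ (N : ℝ) ^ k := by
        exact_mod_cast Nat.choose_le_pow N k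
      have hNk : (N : ℝ) ^ k ≤ (N : ℝ) ^ γ := by
        apply pow_le_pow_right₀ (by exact_mod_cast hN) hkγ
      have hpk : p ^ k ≤ 1 := pow_le_one₀ hp0.le hp1.le
      have hqk : (1 - p) ^ (N - k) ≤ (1 - p) ^ (N - γ) :=
        pow_le_pow_of_le_one hq0.le (by linarith) (Nat.sub_le_sub_left hkγ N)
      calc (N.choose k : ℝ) * p ^ k * (1 - p) ^ (N - k)
          ≤ (N : ℝ) ^ γ * 1 * (1 - p) ^ (N - γ) := by
            apply mul_le_mul (mul_le_mul (hc.trans hNk) hpk (by positivity) (by positivity))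
              hqk (by positivity) (by positivity)
        _ = (N : ℝ) ^ γ * (1 - p) ^ (N - γ) := by ring
    calc S N ≤ ∑ _k ∈ Finset.range γ, (N : ℝ) ^ γ * (1 - p) ^ (N - γ) := h1
      _ = (γ : ℝ) * (N : ℝ) ^ γ * (1 - p) ^ (N - γ) := by
          rw [Finset.sum_const, Finset.card_range, nsmul_eq_mul]; ring
  -- limits of the bounding sequences
  have hc0 : ∀ c : ℝ, Tendsto (fun N : ℕ => c / (N : ℝ)) atTop (nhds 0) :=
    fun c => tendsto_const_div_atTop_nhds_zero_nat c
  have hlogN : Tendsto (fun N : ℕ => Real.log N / (N : ℝ)) atTop (nhds 0) := by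
    have := (Real.isLittleO_log_id_atTop.tendsto_div_nhds_zero).comp
      tendsto_natCast_atTop_atTop (α := ℕ)
    simpa [Function.comp_def] using this
  have htarget : Real.log (1 / (1 - p)) = -Real.log (1 - p) := by
    rw [one_div, Real.log_inv]
  -- upper bound sequence
  have hub : Tendsto (fun N : ℕ => -Real.log (1 - p) + (-Real.log (1/2)) / (N : ℝ))
      atTop (nhds (Real.log (1 / (1 - p)))) := by
    rw [htarget]
    simpa using tendsto_const_nhds.add (hc0 (-Real.log (1/2)))
  -- lower bound sequence
  have hlb : Tendsto (fun N : ℕ => -Real.log (1 - p)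
      + (-Real.log (1/2) - Real.log γ + γ * Real.log (1 - p)) / (N : ℝ)
      - (γ : ℝ) * (Real.log N / (N : ℝ))) atTop (nhds (Real.log (1 / (1 - p)))) := by
    rw [htarget]
    have := ((tendsto_const_nhds (x := -Real.log (1 - p))).add
      (hc0 (-Real.log (1/2) - Real.log γ + γ * Real.log (1 - p)))).sub
      (hlogN.const_mul (γ : ℝ))
    simpa using this
  refine tendsto_of_tendsto_of_tendsto_of_le_of_le' hlb hub ?_ ?_
  · -- lower bound, eventually
    filter_upwards [eventually_ge_atTop γ, eventually_ge_atTop 1] with N hNγ hN1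
    have hN0 : (0:ℝ) < (N:ℝ) := by exact_mod_cast hN1
    have hγ0 : (0:ℝ) < (γ:ℝ) := by exact_mod_cast hγ
    have hlogS : Real.log (S N) ≤ Real.log γ + γ * Real.log N + ((N:ℝ) - γ) * Real.log (1 - p) := by
      have := Real.log_le_log (hS_pos N) (hup N hN1)
      rw [Real.log_mul (by positivity) (by positivity),
        Real.log_mul (by positivity) (by positivity), Real.log_pow, Real.log_pow,
        Nat.cast_sub hNγ] at this
      linarith
    have hlogP : Real.log ((1/2 : ℝ) * S N) = Real.log (1/2) + Real.log (S N) :=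
      Real.log_mul (by norm_num) (hS_pos N).ne'
    have key : (-Real.log (1/2) - Real.log γ - γ * Real.log N - ((N:ℝ) - γ) * Real.log (1 - p))
        ≤ -Real.log ((1/2 : ℝ) * S N) := by rw [hlogP]; linarith
    calc (-Real.log (1 - p) + (-Real.log (1/2) - Real.log γ + γ * Real.log (1 - p)) / (N : ℝ)
          - (γ : ℝ) * (Real.log N / (N : ℝ)))
        = (-Real.log (1/2) - Real.log γ - γ * Real.log N - ((N:ℝ) - γ) * Real.log (1 - p))
            / (N : ℝ) := by field_simp; ring
      _ ≤ (-Real.log ((1/2 : ℝ) * S N)) / (N : ℝ) := by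
          exact div_le_div_of_nonneg_right key hN0.le
  · -- upper bound, eventually
    filter_upwards [eventually_ge_atTop 1] with N hN1
    have hN0 : (0:ℝ) < (N:ℝ) := by exact_mod_cast hN1
    have hlogS : (N:ℝ) * Real.log (1 - p) ≤ Real.log (S N) := by
      have := Real.log_le_log (by positivity) (hlow N)
      rwa [Real.log_pow] at this
    have hlogP : Real.log ((1/2 : ℝ) * S N) = Real.log (1/2) + Real.log (S N) :=
      Real.log_mul (by norm_num) (hS_pos N).ne'
    have key : -Real.log ((1/2 : ℝ) * S N) ≤ -Real.log (1/2) - (N:ℝ) * Real.log (1 - p) := by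
      rw [hlogP]; linarith
    calc (-Real.log ((1/2 : ℝ) * S N)) / (N : ℝ)
        ≤ (-Real.log (1/2) - (N:ℝ) * Real.log (1 - p)) / (N : ℝ) :=
          div_le_div_of_nonneg_right key hN0.le
      _ = -Real.log (1 - p) + (-Real.log (1/2)) / (N : ℝ) := by field_simp; ring
end

section
/- For every p ∈ (0,1) and every real y > 0, the regularized incomplete beta function I_p(x, y) = (∫_0^p t^{x−1}(1−t)^{y−1} dt)/(∫_0^1 t^{x−1}(1−t)^{y−1} dt) satisfies lim_{x→∞} (−log I_p(x, y))/x = −log p. -/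
open Real MeasureTheory intervalIntegral Filter Set

private lemma aux7 (p a y x : ℝ) (hp0 : 0 < p) (hpa : p ≤ a) (ha1 : a < 1) (hy : 0 < y)
    (hx : 2 ≤ x) :
    min 1 ((1-p)^(y-1)) * (p^x / x) ≤ (∫ t in (0:ℝ)..p, t^(x-1)*(1-t)^(y-1)) ∧
    (∫ t in (0:ℝ)..p, t^(x-1)*(1-t)^(y-1)) ≤ max 1 ((1-p)^(y-1)) * p^x ∧
    a^(x-1) * ((1-a)^y / y) ≤ (∫ t in (0:ℝ)..1, t^(x-1)*(1-t)^(y-1)) ∧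
    (∫ t in (0:ℝ)..1, t^(x-1)*(1-t)^(y-1)) ≤ 1/y := by
  have hx0 : (0:ℝ) < x := by linarith
  have hx1 : (0:ℝ) < x - 1 := by linarith
  have ha0 : 0 < a := lt_of_lt_of_le hp0 hpa
  have hp1 : p < 1 := lt_of_le_of_lt hpa ha1
  have h1a : (0:ℝ) < 1 - a := by linarith
  have h1p : (0:ℝ) < 1 - p := by linarith
  have contF : ContinuousOn (fun t : ℝ => t ^ (x-1)) (Set.uIcc (0:ℝ) 1) := fun t _ =>
    (Real.continuousAt_rpow_const t (x-1) (Or.inr hx1.le)).continuousWithinAt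
  -- pointwise bounds on (1-t)^(y-1) for t ∈ [0,p]
  have hbound : ∀ t : ℝ, 0 ≤ t → t ≤ p →
      min 1 ((1-p)^(y-1)) ≤ (1-t)^(y-1) ∧ (1-t)^(y-1) ≤ max 1 ((1-p)^(y-1)) := by
    intro t ht0 htp
    have h1t : 1 - p ≤ 1 - t := by linarith
    have h1t1 : 1 - t ≤ 1 := by linarith
    have h1t0 : (0:ℝ) < 1 - t := by linarith
    rcases le_or_gt 0 (y-1) with hc | hc
    · constructor
      · exact le_trans (min_le_right _ _) (Real.rpow_le_rpow h1p.le h1t hc)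
      · refine le_trans ?_ (le_max_left _ _)
        simpa using Real.rpow_le_rpow h1t0.le h1t1 hc
    · constructor
      · refine le_trans (min_le_left _ _) ?_
        simpa using Real.rpow_le_rpow_of_nonpos h1t0 h1t1 hc.le
      · exact le_trans (Real.rpow_le_rpow_of_nonpos h1p h1t hc.le) (le_max_right _ _)
  -- integrability
  have Ig : IntervalIntegrable (fun t : ℝ => (1-t)^(y-1)) volume 0 1 := by
    have h := (intervalIntegral.intervalIntegrable_rpow' (a := 0) (b := 1)
      (show (-1:ℝ) < y - 1 by linarith)).comp_sub_left 1
    simpa using h.symm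
  have Ifull : IntervalIntegrable (fun t : ℝ => t^(x-1)*(1-t)^(y-1)) volume 0 1 :=
    Ig.continuousOn_mul contF
  have memp : p ∈ Set.uIcc (0:ℝ) 1 := Set.mem_uIcc.mpr (Or.inl ⟨hp0.le, hp1.le⟩)
  have mema : a ∈ Set.uIcc (0:ℝ) 1 := Set.mem_uIcc.mpr (Or.inl ⟨ha0.le, ha1.le⟩)
  have subp : Set.uIcc (0:ℝ) p ⊆ Set.uIcc (0:ℝ) 1 :=
    Set.uIcc_subset_uIcc Set.left_mem_uIcc memp
  have sub0a : Set.uIcc (0:ℝ) a ⊆ Set.uIcc (0:ℝ) 1 :=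
    Set.uIcc_subset_uIcc Set.left_mem_uIcc mema
  have suba : Set.uIcc a (1:ℝ) ⊆ Set.uIcc (0:ℝ) 1 :=
    Set.uIcc_subset_uIcc mema Set.right_mem_uIcc
  have Ip : IntervalIntegrable (fun t : ℝ => t^(x-1)*(1-t)^(y-1)) volume 0 p :=
    Ifull.mono_set subp
  have I0a : IntervalIntegrable (fun t : ℝ => t^(x-1)*(1-t)^(y-1)) volume 0 a :=
    Ifull.mono_set sub0a
  have Ia : IntervalIntegrable (fun t : ℝ => t^(x-1)*(1-t)^(y-1)) volume a 1 :=
    Ifull.mono_set suba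
  -- integral values
  have vP : (∫ t in (0:ℝ)..p, t^(x-1)) = p^x / x := by
    rw [integral_rpow (Or.inl (show (-1:ℝ) < x - 1 by linarith))]
    rw [Real.zero_rpow (show x - 1 + 1 ≠ 0 by linarith), show x - 1 + 1 = x by ring]
    ring
  have vA : ∀ c : ℝ, c ≤ 1 → (∫ t in c..(1:ℝ), (1-t)^(y-1)) = (1-c)^y / y := by
    intro c hc
    have h := intervalIntegral.integral_comp_sub_left (a := c) (b := 1)
      (fun s : ℝ => s^(y-1)) 1
    rw [h, show (1:ℝ) - 1 = 0 by ring,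
      integral_rpow (Or.inl (show (-1:ℝ) < y - 1 by linarith)),
      Real.zero_rpow (show y - 1 + 1 ≠ 0 by linarith), show y - 1 + 1 = y by ring]
    ring
  refine ⟨?_, ?_, ?_, ?_⟩
  · -- lower bound on F
    have c2 : ContinuousOn (fun t : ℝ => min 1 ((1-p)^(y-1)) * t^(x-1)) (Set.uIcc 0 p) :=
      continuousOn_const.mul (contF.mono subp)
    calc min 1 ((1-p)^(y-1)) * (p^x / x)
        = ∫ t in (0:ℝ)..p, min 1 ((1-p)^(y-1)) * t^(x-1) := by
          rw [intervalIntegral.integral_const_mul, vP]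
      _ ≤ ∫ t in (0:ℝ)..p, t^(x-1)*(1-t)^(y-1) := by
          refine integral_mono_on hp0.le c2.intervalIntegrable Ip fun t ht => ?_
          have hb := (hbound t ht.1 ht.2).1
          have htn : 0 ≤ t ^ (x-1) := Real.rpow_nonneg ht.1 _
          calc min 1 ((1-p)^(y-1)) * t^(x-1) = t^(x-1) * min 1 ((1-p)^(y-1)) := mul_comm _ _
            _ ≤ t^(x-1) * (1-t)^(y-1) := mul_le_mul_of_nonneg_left hb htn
  · -- upper bound on F
    have hpx : p ^ (x-1) * p = p ^ x := by
      have h1 : p ^ (x-1) * p ^ (1:ℝ) = p ^ (x-1+1) := (Real.rpow_add hp0 _ _).symm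
      rw [Real.rpow_one] at h1
      rw [h1, show x - 1 + 1 = x by ring]
    have step : (∫ t in (0:ℝ)..p, t^(x-1)*(1-t)^(y-1))
        ≤ ∫ _t in (0:ℝ)..p, p^(x-1) * max 1 ((1-p)^(y-1)) := by
      refine integral_mono_on hp0.le Ip intervalIntegrable_const fun t ht => ?_
      exact mul_le_mul (Real.rpow_le_rpow ht.1 ht.2 hx1.le) (hbound t ht.1 ht.2).2
        (Real.rpow_nonneg (by linarith [ht.2] : (0:ℝ) ≤ 1 - t) _)
        (Real.rpow_nonneg hp0.le _)
    rw [intervalIntegral.integral_const, smul_eq_mul] at step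
    calc (∫ t in (0:ℝ)..p, t^(x-1)*(1-t)^(y-1))
        ≤ (p - 0) * (p^(x-1) * max 1 ((1-p)^(y-1))) := step
      _ = max 1 ((1-p)^(y-1)) * p^x := by rw [← hpx]; ring
  · -- lower bound on B
    have split : (∫ t in (0:ℝ)..1, t^(x-1)*(1-t)^(y-1))
        = (∫ t in (0:ℝ)..a, t^(x-1)*(1-t)^(y-1)) + ∫ t in a..(1:ℝ), t^(x-1)*(1-t)^(y-1) :=
      (integral_add_adjacent_intervals I0a Ia).symm
    have h0a : 0 ≤ ∫ t in (0:ℝ)..a, t^(x-1)*(1-t)^(y-1) := by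
      refine integral_nonneg ha0.le fun t ht => ?_
      exact mul_nonneg (Real.rpow_nonneg ht.1 _)
        (Real.rpow_nonneg (by linarith [ht.2, ha1.le] : (0:ℝ) ≤ 1 - t) _)
    have hA : a^(x-1) * ((1-a)^y/y) ≤ ∫ t in a..(1:ℝ), t^(x-1)*(1-t)^(y-1) := by
      calc a^(x-1) * ((1-a)^y/y)
          = ∫ t in a..(1:ℝ), a^(x-1) * (1-t)^(y-1) := by
            rw [intervalIntegral.integral_const_mul, vA a ha1.le]
        _ ≤ ∫ t in a..(1:ℝ), t^(x-1)*(1-t)^(y-1) := by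
            refine integral_mono_on ha1.le ((Ig.mono_set suba).const_mul _) Ia fun t ht => ?_
            exact mul_le_mul_of_nonneg_right (Real.rpow_le_rpow ha0.le ht.1 hx1.le)
              (Real.rpow_nonneg (by linarith [ht.2] : (0:ℝ) ≤ 1 - t) _)
    linarith
  · -- upper bound on B
    have step : (∫ t in (0:ℝ)..1, t^(x-1)*(1-t)^(y-1)) ≤ ∫ t in (0:ℝ)..1, (1-t)^(y-1) := by
      refine integral_mono_on zero_le_one Ifull Ig fun t ht => ?_
      have h1 : t^(x-1) ≤ 1 := by
        simpa using Real.rpow_le_rpow ht.1 ht.2 hx1.le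
      have h2 : 0 ≤ (1-t)^(y-1) := Real.rpow_nonneg (by linarith [ht.2] : (0:ℝ) ≤ 1 - t) _
      nlinarith
    have := vA 0 zero_le_one
    simp only [sub_zero, Real.one_rpow] at this
    linarith [step, this.le, this.ge]

/-- For `p ∈ (0,1)` and `y > 0`, the regularized incomplete beta function
`I_p(x,y)` satisfies `(-log I_p(x,y)) / x → -log p` as the real parameter
`x → ∞`. -/
theorem stmt_7 (p : ℝ) (hp0 : 0 < p) (hp1 : p < 1) (y : ℝ) (hy : 0 < y) :
    Filter.Tendsto
      (fun x : ℝ =>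
        (-Real.log ((∫ t in (0:ℝ)..p, t ^ (x - 1) * (1 - t) ^ (y - 1)) /
          (∫ t in (0:ℝ)..1, t ^ (x - 1) * (1 - t) ^ (y - 1)))) / x)
      Filter.atTop (nhds (-Real.log p)) := by
  have h1p : (0:ℝ) < 1 - p := by linarith
  set m : ℝ := min 1 ((1-p)^(y-1)) with hmdef
  set M : ℝ := max 1 ((1-p)^(y-1)) with hMdef
  have hm : 0 < m := lt_min one_pos (Real.rpow_pos_of_pos h1p _)
  have hM : 0 < M := lt_of_lt_of_le one_pos (le_max_left _ _)
  rw [Metric.tendsto_nhds]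
  intro ε hε
  set a : ℝ := max p (Real.exp (-(ε/2))) with hadef
  have hpa : p ≤ a := le_max_left _ _
  have ha1 : a < 1 := max_lt hp1 (Real.exp_lt_one_iff.mpr (by linarith))
  have ha0 : 0 < a := lt_of_lt_of_le hp0 hpa
  have h1a : (0:ℝ) < 1 - a := by linarith
  have hloga : -(ε/2) ≤ Real.log a := by
    rw [Real.le_log_iff_exp_le ha0]; exact le_max_right _ _
  have hloga0 : Real.log a ≤ 0 := Real.log_nonpos ha0.le ha1.le
  set C : ℝ := y * Real.log (1-a) - Real.log y - Real.log M - Real.log a with hCdef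
  -- eventual bounds
  have T1 : Tendsto (fun x : ℝ => (Real.log x - Real.log m - Real.log y)/x) atTop (nhds 0) := by
    have h1 : Tendsto (fun x:ℝ => Real.log x / x) atTop (nhds 0) :=
      Real.isLittleO_log_id_atTop.tendsto_div_nhds_zero
    have h2 : Tendsto (fun x:ℝ => (Real.log m + Real.log y)/x) atTop (nhds 0) :=
      tendsto_const_nhds.div_atTop tendsto_id
    have h3 := h1.sub h2
    simp only [sub_zero] at h3
    refine h3.congr fun x => ?_
    ring
  have E1 : ∀ᶠ x : ℝ in atTop, (Real.log x - Real.log m - Real.log y)/x < ε :=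
    T1.eventually_lt_const hε
  have T2 : Tendsto (fun x:ℝ => C/x) atTop (nhds 0) :=
    tendsto_const_nhds.div_atTop tendsto_id
  have E2 : ∀ᶠ x : ℝ in atTop, -(ε/2) < C/x :=
    T2.eventually_const_lt (by linarith)
  filter_upwards [E1, E2, eventually_ge_atTop (2:ℝ)] with x h1 h2 hx2
  have hx0 : (0:ℝ) < x := by linarith
  obtain ⟨FL, FU, BL, BU⟩ := aux7 p a y x hp0 hpa ha1 hy hx2
  set F : ℝ := ∫ t in (0:ℝ)..p, t ^ (x - 1) * (1 - t) ^ (y - 1) with hFdef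
  set B : ℝ := ∫ t in (0:ℝ)..1, t ^ (x - 1) * (1 - t) ^ (y - 1) with hBdef
  have hFpos : 0 < F := lt_of_lt_of_le (by positivity) FL
  have hBpos : 0 < B := lt_of_lt_of_le (by positivity) BL
  -- log bounds
  have lF1 : Real.log m + (x * Real.log p - Real.log x) ≤ Real.log F := by
    have h := (Real.log_le_log_iff (by positivity) hFpos).mpr FL
    rwa [Real.log_mul hm.ne' (by positivity), Real.log_div (by positivity) hx0.ne',
      Real.log_rpow hp0] at h
  have lF2 : Real.log F ≤ Real.log M + x * Real.log p := by
    have h := (Real.log_le_log_iff hFpos (by positivity)).mpr FU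
    rwa [Real.log_mul hM.ne' (by positivity), Real.log_rpow hp0] at h
  have lB1 : (x-1) * Real.log a + (y * Real.log (1-a) - Real.log y) ≤ Real.log B := by
    have h := (Real.log_le_log_iff (by positivity) hBpos).mpr BL
    rwa [Real.log_mul (by positivity) (by positivity), Real.log_div (by positivity) hy.ne',
      Real.log_rpow ha0, Real.log_rpow h1a] at h
  have lB2 : Real.log B ≤ -Real.log y := by
    have h := (Real.log_le_log_iff hBpos (by positivity)).mpr BU
    rwa [one_div, Real.log_inv] at h
  -- rewrite the goal
  have hfx : (-Real.log (F/B)) / x = (Real.log B - Real.log F)/x := by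
    rw [Real.log_div hFpos.ne' hBpos.ne']; ring
  rw [Real.dist_eq, hfx, sub_neg_eq_add, abs_lt]
  have hexp : (x-1) * Real.log a = x * Real.log a - Real.log a := by ring
  constructor
  · -- lower bound
    have hnum : x * Real.log a + C ≤ Real.log B - Real.log F + x * Real.log p := by
      rw [hCdef]; rw [hexp] at lB1; linarith
    have key : Real.log a + C/x ≤ (Real.log B - Real.log F)/x + Real.log p := by
      have h4 : (x * Real.log a + C)/x ≤ (Real.log B - Real.log F + x * Real.log p)/x := by
        gcongr
      calc Real.log a + C/x = (x * Real.log a + C)/x := by field_simp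
        _ ≤ (Real.log B - Real.log F + x * Real.log p)/x := h4
        _ = (Real.log B - Real.log F)/x + Real.log p := by field_simp
    linarith
  · -- upper bound
    have hnum : Real.log B - Real.log F + x * Real.log p
        ≤ Real.log x - Real.log m - Real.log y := by linarith
    have key : (Real.log B - Real.log F)/x + Real.log p
        ≤ (Real.log x - Real.log m - Real.log y)/x := by
      have h4 : (Real.log B - Real.log F + x * Real.log p)/x
          ≤ (Real.log x - Real.log m - Real.log y)/x := by gcongr
      calc (Real.log B - Real.log F)/x + Real.log p
          = (Real.log B - Real.log F + x * Real.log p)/x := by field_simp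
        _ ≤ _ := h4
    linarith
end

section
/- Let m ≥ 1 be a natural number and let K > 0, a > 0, and λ > 0 be reals. Define g : (0,∞) → ℝ by g(t) = t^{−m/2} · exp(−a²/(4Kt) − λt), and let t_p = ( −(m/2) + √(m²/4 + λa²/K) ) / (2λ), which is the unique positive root of the quadratic λt² + (m/2)t − a²/(4K) = 0. Then g attains a strict global maximum at t_p: for every t > 0 with t ≠ t_p, g(t) < g(t_p). -/
private lemma stmt_9_aux (m : ℕ) (K a lam : ℝ) (hK : 0 < K) (ha : 0 < a) (hlam : 0 < lam)
    (tp : ℝ) (htp : 0 < tp)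
    (htpQ : lam * tp ^ 2 + ((m : ℝ) / 2) * tp - a ^ 2 / (4 * K) = 0) :
    ∀ t : ℝ, 0 < t → t ≠ tp →
      t ^ (-(m : ℝ) / 2) * Real.exp (-(a ^ 2) / (4 * K * t) - lam * t) <
        tp ^ (-(m : ℝ) / 2) * Real.exp (-(a ^ 2) / (4 * K * tp) - lam * tp) := by
  set c : ℝ := a ^ 2 / (4 * K) with hc
  have hcpos : 0 < c := by positivity
  set f : ℝ → ℝ := fun t => -((m:ℝ)/2) * Real.log t - c * t⁻¹ - lam * t with hf
  set D : ℝ → ℝ := fun t => -((m:ℝ)/2) * t⁻¹ - c * (-(t^2)⁻¹) - lam * 1 with hD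
  have hderiv : ∀ t : ℝ, 0 < t → HasDerivAt f (D t) t := by
    intro t ht
    exact (((Real.hasDerivAt_log ht.ne').const_mul (-((m:ℝ)/2))).sub
      ((hasDerivAt_inv ht.ne').const_mul c)).sub ((hasDerivAt_id t).const_mul lam)
  have hDval : ∀ t : ℝ, 0 < t → D t = (c - ((m:ℝ)/2) * t - lam * t ^ 2) / t ^ 2 := by
    intro t ht
    simp only [hD]
    field_simp
    ring
  have hDpos : ∀ t ∈ Set.Ioo (0:ℝ) tp, 0 < D t := by
    intro t ht
    rw [hDval t ht.1]
    apply div_pos _ (pow_pos ht.1 2)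
    have hpos : (0:ℝ) < lam * (tp + t) + (m:ℝ)/2 :=
      add_pos_of_pos_of_nonneg (mul_pos hlam (add_pos htp ht.1)) (by positivity)
    nlinarith [mul_pos (sub_pos.2 ht.2) hpos]
  have hDneg : ∀ t ∈ Set.Ioi tp, D t < 0 := by
    intro t ht
    have ht0 : 0 < t := htp.trans ht
    rw [hDval t ht0]
    apply div_neg_of_neg_of_pos _ (pow_pos ht0 2)
    have ht' : tp < t := ht
    have hpos : (0:ℝ) < lam * (t + tp) + (m:ℝ)/2 :=
      add_pos_of_pos_of_nonneg (mul_pos hlam (add_pos ht0 htp)) (by positivity)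
    nlinarith [mul_pos (sub_pos.2 ht') hpos]
  have hmono : StrictMonoOn f (Set.Ioc 0 tp) := by
    apply StrictMonoOn.mono (s := Set.Ioc 0 tp) ?_ le_rfl
    apply strictMonoOn_of_deriv_pos (convex_Ioc 0 tp)
    · exact fun x hx => ((hderiv x hx.1).continuousAt).continuousWithinAt
    · intro x hx
      rw [interior_Ioc] at hx
      rw [(hderiv x hx.1).deriv]
      exact hDpos x hx
  have hanti : StrictAntiOn f (Set.Ici tp) := by
    apply strictAntiOn_of_deriv_neg (convex_Ici tp)
    · exact fun x hx => ((hderiv x (htp.trans_le hx)).continuousAt).continuousWithinAt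
    · intro x hx
      rw [interior_Ici] at hx
      rw [(hderiv x (htp.trans hx)).deriv]
      exact hDneg x hx
  have hrepr : ∀ t : ℝ, 0 < t →
      t ^ (-(m : ℝ) / 2) * Real.exp (-(a ^ 2) / (4 * K * t) - lam * t) = Real.exp (f t) := by
    intro t ht
    rw [Real.rpow_def_of_pos ht, ← Real.exp_add]
    congr 1
    have : -(a ^ 2) / (4 * K * t) = -(c * t⁻¹) := by
      rw [hc]; field_simp
    rw [this, hf]
    ring
  intro t ht htne
  rw [hrepr t ht, hrepr tp htp]
  apply Real.exp_lt_exp.2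
  rcases lt_or_gt_of_ne htne with h | h
  · exact hmono ⟨ht, h.le⟩ ⟨htp, le_rfl⟩ h
  · exact hanti (Set.mem_Ici.2 (le_refl tp)) h.le h

/-- With degradation rate `λ > 0`, `g(t) = t^{-m/2} exp(-a²/(4Kt) - λt)` attains
a strict global maximum on `(0,∞)` at
`t_p = (-(m/2) + √(m²/4 + λa²/K)) / (2λ)`, the unique positive root of
`λ t² + (m/2) t - a²/(4K) = 0`. -/
theorem stmt_9 (m : ℕ) (hm : 1 ≤ m) (K a lam : ℝ) (hK : 0 < K) (ha : 0 < a)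
    (hlam : 0 < lam) :
    let tp : ℝ := (-((m : ℝ) / 2) + Real.sqrt ((m : ℝ) ^ 2 / 4 + lam * a ^ 2 / K)) / (2 * lam)
    (0 < tp ∧ lam * tp ^ 2 + ((m : ℝ) / 2) * tp - a ^ 2 / (4 * K) = 0 ∧
      (∀ t : ℝ, 0 < t → lam * t ^ 2 + ((m : ℝ) / 2) * t - a ^ 2 / (4 * K) = 0 → t = tp)) ∧
    ∀ t : ℝ, 0 < t → t ≠ tp →
      t ^ (-(m : ℝ) / 2) * Real.exp (-(a ^ 2) / (4 * K * t) - lam * t) <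
        tp ^ (-(m : ℝ) / 2) * Real.exp (-(a ^ 2) / (4 * K * tp) - lam * tp) := by
  intro tp
  have hm1 : (1:ℝ) ≤ (m:ℝ) := by exact_mod_cast hm
  set s : ℝ := Real.sqrt ((m : ℝ) ^ 2 / 4 + lam * a ^ 2 / K) with hs
  have harg : (0:ℝ) ≤ (m : ℝ) ^ 2 / 4 + lam * a ^ 2 / K := by positivity
  have hs2 : s ^ 2 = (m : ℝ) ^ 2 / 4 + lam * a ^ 2 / K := Real.sq_sqrt harg
  have hs0 : 0 ≤ s := Real.sqrt_nonneg _
  have hsgt : (m:ℝ)/2 < s := by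
    rw [hs]
    rw [show ((m:ℝ)/2) = Real.sqrt (((m:ℝ)/2)^2) from (Real.sqrt_sq (by positivity)).symm]
    apply Real.sqrt_lt_sqrt (by positivity)
    have : 0 < lam * a^2 / K := by positivity
    nlinarith
  have htp : 0 < tp := by
    have : 0 < -((m:ℝ)/2) + s := by linarith
    exact div_pos this (by linarith)
  have hdef : tp = (-((m:ℝ)/2) + s) / (2 * lam) := rfl
  have htpQ : lam * tp ^ 2 + ((m : ℝ) / 2) * tp - a ^ 2 / (4 * K) = 0 := by
    rw [hdef]
    have hs2' : s^2 * K = (m:ℝ)^2/4 * K + lam * a^2 := by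
      rw [hs2]; field_simp
    field_simp
    linear_combination 16 * hs2'
  refine ⟨⟨htp, htpQ, ?_⟩, stmt_9_aux m K a lam hK ha hlam tp htp htpQ⟩
  intro t ht hQ
  have h0 : (t - tp) * (lam * (t + tp) + (m:ℝ)/2) = 0 := by linear_combination hQ - htpQ
  rcases mul_eq_zero.1 h0 with h | h
  · linarith [sub_eq_zero.1 h]
  · exfalso; nlinarith
end
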